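/- arXiv:math/0503629 — 4 statements merged into one kernel-verified Lean document; each statement's English description precedes it below -/
import Mathlib

section
/- The brackets [D(u,r),D(v,s)] = D((u,s)v−(v,r)u, r+s) − (u,s)(v,r)K(r,r+s), [D(u,r),K(v,s)] = (u,s)K(v,r+s)+(u,v)K(r,r+s), and [K(u,r),K(v,s)] = 0 define a Lie algebra structure on Ω_A/d_A ⊕ Der A (the Jacobi identity holds). -/
/- STATEMENT 2: The brackets
[D(u,r),D(v,s)] = D((u,s)v−(v,r)u, r+s) − (u,s)(v,r)K(r,r+s),
[D(u,r),K(v,s)] = (u,s)K(v,r+s)+(u,v)K(r,r+s), [K(u,r),K(v,s)] = 0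
define a Lie algebra structure on Ω_A/d_A ⊕ Der A (the Jacobi identity holds). -/

abbrev OmegaA (n : ℕ) : Type := ((Fin n → ℤ) × Fin n) →₀ ℂ

noncomputable def dAelt (n : ℕ) (r : Fin n → ℤ) : OmegaA n :=
  ∑ i, Finsupp.single (r, i) (r i : ℂ)

noncomputable def dA (n : ℕ) : Submodule ℂ (OmegaA n) :=
  Submodule.span ℂ (Set.range (dAelt n))

abbrev OmegaQuot (n : ℕ) := OmegaA n ⧸ dA n

/-- `K(u, r) = Σᵢ uᵢ t^r Kᵢ ∈ Ω_A/d_A`. -/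
noncomputable def Kc (n : ℕ) (u : Fin n → ℂ) (r : Fin n → ℤ) : OmegaQuot n :=
  Submodule.Quotient.mk (∑ i, Finsupp.single (r, i) (u i))

/-- `Der A` as a vector space, with basis `t^r tᵢ d/dtᵢ` indexed by `(r, i)`. -/
abbrev DerF (n : ℕ) : Type := ((Fin n → ℤ) × Fin n) →₀ ℂ

/-- `D(u, r) = Σᵢ uᵢ t^r tᵢ d/dtᵢ ∈ Der A`. -/
noncomputable def Dc (n : ℕ) (u : Fin n → ℂ) (r : Fin n → ℤ) : DerF n :=
  ∑ i, Finsupp.single (r, i) (u i)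

/-- The standard bilinear form on `ℂⁿ`. -/
noncomputable def dot {n : ℕ} (u v : Fin n → ℂ) : ℂ := ∑ i, u i * v i

/-- `ℤⁿ` viewed inside `ℂⁿ`. -/
def zc {n : ℕ} (r : Fin n → ℤ) : Fin n → ℂ := fun i => (r i : ℂ)

/-- The abelian extension `Ω_A/d_A ⊕ Der A` as a vector space. -/
abbrev HatDer (n : ℕ) := OmegaQuot n × DerF n

section Aux

variable {n : ℕ}

abbrev Idx (n : ℕ) := (Fin n → ℤ) × Fin n

noncomputable def L1 {M : Type} [AddCommGroup M] [Module ℂ M]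
    (f : Idx n → M) : (Idx n →₀ ℂ) →ₗ[ℂ] M :=
  Finsupp.lsum ℂ fun p => LinearMap.toSpanSingleton ℂ M (f p)

@[simp] lemma L1_single {M : Type} [AddCommGroup M] [Module ℂ M]
    (f : Idx n → M) (p : Idx n) (c : ℂ) : L1 f (Finsupp.single p c) = c • f p := by
  simp [L1]

noncomputable def L2 {M : Type} [AddCommGroup M] [Module ℂ M]
    (f : Idx n → Idx n → M) : (Idx n →₀ ℂ) →ₗ[ℂ] (Idx n →₀ ℂ) →ₗ[ℂ] M :=
  L1 (fun p => L1 (f p))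

@[simp] lemma L2_single {M : Type} [AddCommGroup M] [Module ℂ M]
    (f : Idx n → Idx n → M) (p q : Idx n) (c d : ℂ) :
    L2 f (Finsupp.single p c) (Finsupp.single q d) = c • d • f p q := by
  simp [L2]

@[simp] lemma mk_dAelt (p : Fin n → ℤ) :
    (Submodule.Quotient.mk (dAelt n p) : OmegaQuot n) = 0 := by
  rw [Submodule.Quotient.mk_eq_zero]
  exact Submodule.subset_span ⟨p, rfl⟩

lemma Kc_add (u v : Fin n → ℂ) (p : Fin n → ℤ) :
    Kc n u p + Kc n v p = Kc n (u + v) p := by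
  simp [Kc, ← Submodule.Quotient.mk_add, ← Finset.sum_add_distrib, Finsupp.single_add]

lemma Kc_smul (c : ℂ) (u : Fin n → ℂ) (p : Fin n → ℤ) :
    c • Kc n u p = Kc n (c • u) p := by
  simp [Kc, ← Submodule.Quotient.mk_smul, Finset.smul_sum, Finsupp.smul_single]

@[simp] lemma Kc_zc_self (p : Fin n → ℤ) : Kc n (zc p) p = 0 := by
  have : Kc n (zc p) p = Submodule.Quotient.mk (dAelt n p) := rfl
  rw [this, mk_dAelt]

/-- The class of a single basis 2-form. -/
noncomputable def Qk (p : Idx n) : OmegaQuot n :=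
  Submodule.Quotient.mk (Finsupp.single p (1 : ℂ))

lemma Kc_eq_sum (u : Fin n → ℂ) (p : Fin n → ℤ) :
    Kc n u p = ∑ i, u i • Qk (p, i) := by
  simp only [Kc, Qk, ← Submodule.Quotient.mk_smul, Finsupp.smul_single, smul_eq_mul, mul_one]
  exact map_sum (dA n).mkQ _ _

/-- basis values of the `[D,D]` bracket, `DerF` component. -/
noncomputable def fD (p q : Idx n) : DerF n :=
  Finsupp.single (p.1 + q.1, q.2) (q.1 p.2 : ℂ) - Finsupp.single (p.1 + q.1, p.2) (p.1 q.2 : ℂ)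

/-- basis values of the `[D,D]` bracket, cocycle component. -/
noncomputable def fO (p q : Idx n) : OmegaQuot n :=
  (-((q.1 p.2 : ℂ) * (p.1 q.2 : ℂ))) • Kc n (zc p.1) (p.1 + q.1)

/-- basis values of the action of `DerF` on `OmegaA`. -/
noncomputable def fA (p q : Idx n) : OmegaQuot n :=
  (q.1 p.2 : ℂ) • Qk (p.1 + q.1, q.2) +
    (if p.2 = q.2 then (1 : ℂ) else 0) • Kc n (zc p.1) (p.1 + q.1)

noncomputable def DDD : DerF n →ₗ[ℂ] DerF n →ₗ[ℂ] DerF n := L2 fD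
noncomputable def DDO : DerF n →ₗ[ℂ] DerF n →ₗ[ℂ] OmegaQuot n := L2 fO
noncomputable def A0 : DerF n →ₗ[ℂ] OmegaA n →ₗ[ℂ] OmegaQuot n := L2 fA

@[simp] lemma L2_single_left {M : Type} [AddCommGroup M] [Module ℂ M]
    (f : Idx n → Idx n → M) (p : Idx n) (c : ℂ) :
    L2 f (Finsupp.single p c) = c • L1 (f p) := L1_single _ _ _

lemma L1_sum_single {M : Type} [AddCommGroup M] [Module ℂ M]
    (f : Idx n → M) (s : Fin n → ℤ) (g : Fin n → ℂ) :
    L1 f (∑ i, Finsupp.single (s, i) (g i)) = ∑ i, g i • f (s, i) := by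
  rw [map_sum]; simp

lemma zc_add (r s : Fin n → ℤ) : zc (r + s) = zc r + zc s := by
  funext i; simp [zc]

lemma A0_single_dAelt (p : Idx n) (c : ℂ) (s : Fin n → ℤ) :
    A0 (Finsupp.single p c) (dAelt n s) = 0 := by
  obtain ⟨r, i⟩ := p
  rw [show (A0 : DerF n →ₗ[ℂ] _) = L2 fA from rfl, L2_single_left, dAelt,
    LinearMap.smul_apply, L1_sum_single]
  have : ∀ j : Fin n, (s j : ℂ) • fA (r, i) (s, j) =
      ((s j : ℂ) * (s i : ℂ)) • Qk (r + s, j)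
        + ((if i = j then (1:ℂ) else 0) * (s j : ℂ)) • Kc n (zc r) (r + s) := by
    intro j
    simp only [fA, smul_add, smul_smul]
    ring_nf
  rw [Finset.sum_congr rfl (fun j _ => this j), Finset.sum_add_distrib]
  have h1 : ∑ j, ((s j : ℂ) * (s i : ℂ)) • Qk (r + s, j)
      = (s i : ℂ) • Kc n (zc s) (r + s) := by
    rw [Kc_eq_sum, Finset.smul_sum]
    exact Finset.sum_congr rfl fun j _ => by rw [smul_smul, mul_comm]; rfl
  have h2 : ∑ j, ((if i = j then (1:ℂ) else 0) * (s j : ℂ)) • Kc n (zc r) (r + s)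
      = (s i : ℂ) • Kc n (zc r) (r + s) := by
    rw [Finset.sum_eq_single i]
    · simp
    · intro b _ hb; simp [Ne.symm hb]
    · simp
  rw [h1, h2, ← smul_add, Kc_add, ← zc_add]
  have : s + r = r + s := by abel
  rw [this, Kc_zc_self, smul_zero, smul_zero]

lemma A0_dAelt (D : DerF n) (s : Fin n → ℤ) : A0 D (dAelt n s) = 0 := by
  induction D using Finsupp.induction_linear with
  | zero => simp
  | add f g hf hg => rw [map_add, LinearMap.add_apply, hf, hg, add_zero]
  | single p c => exact A0_single_dAelt p c s

noncomputable def Aq : DerF n →ₗ[ℂ] OmegaQuot n →ₗ[ℂ] OmegaQuot n :=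
  ((dA n).liftQ (A0 (n := n)).flip (by
    show Submodule.span ℂ (Set.range (dAelt n)) ≤ _
    rw [Submodule.span_le]
    rintro _ ⟨s, rfl⟩
    rw [SetLike.mem_coe, LinearMap.mem_ker]
    exact LinearMap.ext fun D => A0_dAelt D s)).flip

@[simp] lemma Aq_mk (D : DerF n) (w : OmegaA n) :
    Aq D (Submodule.Quotient.mk w) = A0 D w := by
  simp [Aq]

noncomputable def Br : HatDer n →ₗ[ℂ] HatDer n →ₗ[ℂ] HatDer n :=
  LinearMap.mk₂ ℂ
    (fun x y => (DDO x.2 y.2 + Aq x.2 y.1 - Aq y.2 x.1, DDD x.2 y.2))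
    (by intro a b y; simp only [Prod.fst_add, Prod.snd_add, map_add,
          LinearMap.add_apply, Prod.mk_add_mk, Prod.mk.injEq]
        exact ⟨by abel, trivial⟩)
    (by intro c a y; simp only [Prod.smul_fst, Prod.smul_snd, map_smul,
          LinearMap.smul_apply, Prod.smul_mk, Prod.mk.injEq]
        refine ⟨?_, trivial⟩
        rw [smul_sub, smul_add])
    (by intro a b y; simp only [Prod.fst_add, Prod.snd_add, map_add,
          LinearMap.add_apply, Prod.mk_add_mk, Prod.mk.injEq]
        exact ⟨by abel, trivial⟩)
    (by intro c a y; simp only [Prod.smul_fst, Prod.smul_snd, map_smul,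
          LinearMap.smul_apply, Prod.smul_mk, Prod.mk.injEq]
        refine ⟨?_, trivial⟩
        rw [smul_sub, smul_add])

@[simp] lemma Br_apply (x y : HatDer n) :
    Br x y = (DDO x.2 y.2 + Aq x.2 y.1 - Aq y.2 x.1, DDD x.2 y.2) := rfl

lemma L1_Dc {M : Type} [AddCommGroup M] [Module ℂ M]
    (f : Idx n → M) (u : Fin n → ℂ) (r : Fin n → ℤ) :
    L1 f (Dc n u r) = ∑ i, u i • f (r, i) := by
  rw [Dc]; exact L1_sum_single f r u

lemma L2_Dc {M : Type} [AddCommGroup M] [Module ℂ M]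
    (f : Idx n → Idx n → M) (u v : Fin n → ℂ) (r s : Fin n → ℤ) :
    L2 f (Dc n u r) (Dc n v s) = ∑ i, ∑ j, (u i * v j) • f (r, i) (s, j) := by
  rw [L2, L1_Dc, LinearMap.sum_apply]
  refine Finset.sum_congr rfl fun i _ => ?_
  rw [LinearMap.smul_apply, L1_Dc, Finset.smul_sum]
  exact Finset.sum_congr rfl fun j _ => by rw [smul_smul]

lemma dot_eq (u : Fin n → ℂ) (s : Fin n → ℤ) : dot u (zc s) = ∑ i, u i * (s i : ℂ) := rfl

lemma Dc_sub_smul (a b : ℂ) (u v : Fin n → ℂ) (p : Fin n → ℤ) :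
    Dc n (a • v - b • u) p = a • Dc n v p - b • Dc n u p := by
  simp [Dc, Finset.smul_sum, Finsupp.smul_single, ← Finset.sum_sub_distrib,
    Finsupp.single_sub, smul_eq_mul, Pi.sub_apply, Pi.smul_apply]

lemma DDD_Dc (u v : Fin n → ℂ) (r s : Fin n → ℤ) :
    DDD (Dc n u r) (Dc n v s) = Dc n (dot u (zc s) • v - dot v (zc r) • u) (r + s) := by
  rw [show (DDD : DerF n →ₗ[ℂ] _) = L2 fD from rfl, L2_Dc, Dc_sub_smul]
  have key : ∀ i j : Fin n, (u i * v j) • fD (r, i) ((s, j) : Idx n) =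
      (u i * (s i : ℂ)) • Finsupp.single ((r + s, j) : Idx n) (v j)
        - (v j * (r j : ℂ)) • Finsupp.single ((r + s, i) : Idx n) (u i) := by
    intro i j
    simp only [fD, smul_sub, Finsupp.smul_single, smul_eq_mul]
    congr 1 <;> congr 1 <;> ring
  rw [Finset.sum_congr rfl fun i _ => Finset.sum_congr rfl fun j _ => key i j]
  rw [Finset.sum_congr rfl fun i (_ : i ∈ Finset.univ) => Finset.sum_sub_distrib _ _,
    Finset.sum_sub_distrib]
  congr 1
  · rw [Finset.sum_comm, dot_eq, Dc, Finset.smul_sum]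
    refine Finset.sum_congr rfl fun j _ => ?_
    rw [← Finset.sum_smul]
  · rw [dot_eq, Dc, Finset.smul_sum]
    refine Finset.sum_congr rfl fun i _ => ?_
    rw [← Finset.sum_smul]

lemma sum_sum_smul {M : Type} [AddCommGroup M] [Module ℂ M]
    (x y : Fin n → ℂ) (C : M) :
    ∑ i, ∑ j, (x i * y j) • C = ((∑ i, x i) * (∑ j, y j)) • C := by
  rw [Finset.sum_mul, Finset.sum_smul]
  refine Finset.sum_congr rfl fun i _ => ?_
  rw [Finset.mul_sum, Finset.sum_smul]

lemma DDO_Dc (u v : Fin n → ℂ) (r s : Fin n → ℤ) :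
    DDO (Dc n u r) (Dc n v s) = (-(dot u (zc s) * dot v (zc r))) • Kc n (zc r) (r + s) := by
  rw [show (DDO : DerF n →ₗ[ℂ] _) = L2 fO from rfl, L2_Dc]
  have key : ∀ i j : Fin n, (u i * v j) • fO ((r, i) : Idx n) ((s, j) : Idx n) =
      ((u i * (s i : ℂ)) * (v j * (r j : ℂ))) • (-Kc n (zc r) (r + s)) := by
    intro i j
    simp only [fO]
    rw [smul_smul, smul_neg, ← neg_smul]
    congr 1; ring
  rw [Finset.sum_congr rfl fun i _ => Finset.sum_congr rfl fun j _ => key i j,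
    sum_sum_smul, smul_neg, ← neg_smul]
  rfl

lemma Kc_eq_mk (v : Fin n → ℂ) (s : Fin n → ℤ) :
    Kc n v s = Submodule.Quotient.mk (Dc n v s) := rfl

lemma A0_Dc (u v : Fin n → ℂ) (r s : Fin n → ℤ) :
    A0 (Dc n u r) (Dc n v s) =
      dot u (zc s) • Kc n v (r + s) + dot u v • Kc n (zc r) (r + s) := by
  rw [show (A0 : DerF n →ₗ[ℂ] _) = L2 fA from rfl, L2_Dc]
  have key : ∀ i j : Fin n, (u i * v j) • fA ((r, i) : Idx n) ((s, j) : Idx n) =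
      ((u i * (s i : ℂ)) * v j) • Qk ((r + s, j) : Idx n)
        + (if i = j then u i * v j else 0) • Kc n (zc r) (r + s) := by
    intro i j
    simp only [fA, smul_add]
    congr 1
    · rw [smul_smul]; congr 1; ring
    · rw [smul_smul]; congr 1; split_ifs <;> ring
  rw [Finset.sum_congr rfl fun i _ => Finset.sum_congr rfl fun j _ => key i j]
  rw [Finset.sum_congr rfl fun i (_ : i ∈ Finset.univ) => Finset.sum_add_distrib,
    Finset.sum_add_distrib]
  congr 1
  · rw [Kc_eq_sum, Finset.smul_sum, Finset.sum_comm]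
    refine Finset.sum_congr rfl fun j _ => ?_
    rw [smul_smul, ← Finset.sum_smul, ← Finset.sum_mul]
    rfl
  · simp only [ite_smul, zero_smul, Finset.sum_ite_eq, Finset.mem_univ, if_true]
    rw [← Finset.sum_smul]
    rfl

lemma L2_apply_apply {M : Type} [AddCommGroup M] [Module ℂ M]
    (f : Idx n → Idx n → M) (x y : Idx n →₀ ℂ) :
    L2 f x y = ∑ p ∈ x.support, ∑ q ∈ y.support, (x p * y q) • f p q := by
  rw [L2, L1]
  erw [Finsupp.lsum_apply]
  rw [Finsupp.sum]
  simp only [LinearMap.toSpanSingleton_apply, LinearMap.sum_apply, LinearMap.smul_apply]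
  refine Finset.sum_congr rfl fun p _ => ?_
  rw [L1]
  erw [Finsupp.lsum_apply]
  rw [Finsupp.sum, Finset.smul_sum]
  refine Finset.sum_congr rfl fun q _ => ?_
  rw [LinearMap.toSpanSingleton_apply, smul_smul]

lemma L2_diag_zero {M : Type} [AddCommGroup M] [Module ℂ M]
    (f : Idx n → Idx n → M) (hf : ∀ p q, f p q + f q p = 0) (x : Idx n →₀ ℂ) :
    L2 f x x = 0 := by
  have e1 := L2_apply_apply f x x
  have e2 : L2 f x x = ∑ p ∈ x.support, ∑ q ∈ x.support, (x p * x q) • f q p := by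
    rw [e1, Finset.sum_comm]
    exact Finset.sum_congr rfl fun p _ => Finset.sum_congr rfl fun q _ => by rw [mul_comm]
  have h2 : L2 f x x + L2 f x x = 0 := by
    nth_rewrite 1 [e1]
    rw [e2, ← Finset.sum_add_distrib]
    refine Finset.sum_eq_zero fun p _ => ?_
    rw [← Finset.sum_add_distrib]
    refine Finset.sum_eq_zero fun q _ => ?_
    rw [← smul_add, hf, smul_zero]
  have := congrArg (fun z => ((2 : ℂ))⁻¹ • z) h2
  simpa [← two_smul ℂ (L2 f x x), smul_smul] using this

lemma fD_antisym (p q : Idx n) : fD p q + fD (n := n) q p = 0 := by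
  obtain ⟨r, i⟩ := p; obtain ⟨s, j⟩ := q
  simp only [fD]
  rw [show s + r = r + s from by abel]
  abel

lemma fO_antisym (p q : Idx n) : fO p q + fO (n := n) q p = 0 := by
  obtain ⟨r, i⟩ := p; obtain ⟨s, j⟩ := q
  simp only [fO]
  rw [show s + r = r + s from by abel,
    show ((r j : ℂ) * (s i : ℂ)) = (s i : ℂ) * (r j : ℂ) from mul_comm _ _,
    ← smul_add, Kc_add, ← zc_add, Kc_zc_self, smul_zero]

@[simp] lemma act_Q (p m : Idx n) :
    Aq (Finsupp.single p (1:ℂ)) (Qk m) = fA p m := by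
  rw [Qk, Aq_mk, show (A0 : DerF n →ₗ[ℂ] _) = L2 fA from rfl, L2_single, one_smul, one_smul]

lemma act_K (r : Fin n → ℤ) (i : Fin n) (a b : Fin n → ℤ) :
    Aq (Finsupp.single ((r, i) : Idx n) (1:ℂ)) (Kc n (zc a) b) =
      (b i : ℂ) • Kc n (zc a) (r + b) + (a i : ℂ) • Kc n (zc r) (r + b) := by
  rw [Kc, Aq_mk, map_sum, show (A0 : DerF n →ₗ[ℂ] _) = L2 fA from rfl]
  have key : ∀ m : Fin n, L2 fA (Finsupp.single ((r, i) : Idx n) (1:ℂ))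
        (Finsupp.single ((b, m) : Idx n) (zc a m)) =
      ((a m : ℂ) * (b i : ℂ)) • Qk ((r + b, m) : Idx n)
        + ((a m : ℂ) * (if i = m then (1:ℂ) else 0)) • Kc n (zc r) (r + b) := by
    intro m
    rw [L2_single, one_smul, fA, smul_add, smul_smul, smul_smul]
    rfl
  rw [Finset.sum_congr rfl fun m _ => key m, Finset.sum_add_distrib]
  congr 1
  · rw [Kc_eq_sum, Finset.smul_sum]
    refine Finset.sum_congr rfl fun m _ => ?_
    rw [smul_smul, mul_comm]
    rfl
  · simp only [mul_ite, mul_one, mul_zero, ite_smul, zero_smul, Finset.sum_ite_eq,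
      Finset.mem_univ, if_true]

/-- Core computation: the action is a representation of the bracket, on basis elements. -/
lemma J1 (r s t : Fin n → ℤ) (i j k : Fin n) :
    A0 (fD ((r, i) : Idx n) ((s, j) : Idx n)) (Finsupp.single ((t, k) : Idx n) (1:ℂ)) =
      Aq (Finsupp.single ((r, i) : Idx n) (1:ℂ)) (fA ((s, j) : Idx n) ((t, k) : Idx n))
        - Aq (Finsupp.single ((s, j) : Idx n) (1:ℂ)) (fA ((r, i) : Idx n) ((t, k) : Idx n)) := by
  have hA : ∀ (m : Fin n → ℤ) (a : Fin n) (c : ℂ),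
      A0 (Finsupp.single ((m, a) : Idx n) c) (Finsupp.single ((t, k) : Idx n) (1:ℂ))
        = c • fA ((m, a) : Idx n) ((t, k) : Idx n) := by
    intro m a c
    rw [show (A0 : DerF n →ₗ[ℂ] _) = L2 fA from rfl, L2_single, one_smul]
  rw [fD, map_sub, LinearMap.sub_apply, hA, hA]
  simp only [fA, map_add, map_smul, act_Q, act_K]
  simp only [fA, smul_add, smul_smul]
  -- normalize exponents to r + s + t
  rw [show r + (s + t) = r + s + t from by abel, show s + (r + t) = r + s + t from by abel,
    zc_add, ← Kc_add]
  push_cast [Pi.add_apply]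
  module

lemma hDDD (p : Idx n) (m : Fin n → ℤ) (a : Fin n) (c : ℂ) :
    DDD (Finsupp.single p (1:ℂ)) (Finsupp.single ((m, a) : Idx n) c) = c • fD p (m, a) := by
  rw [show (DDD : DerF n →ₗ[ℂ] _) = L2 fD from rfl, L2_single, one_smul]

lemma hDDO (p : Idx n) (m : Fin n → ℤ) (a : Fin n) (c : ℂ) :
    DDO (Finsupp.single p (1:ℂ)) (Finsupp.single ((m, a) : Idx n) c) = c • fO p (m, a) := by
  rw [show (DDO : DerF n →ₗ[ℂ] _) = L2 fO from rfl, L2_single, one_smul]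

/-- Core computation: Jacobi identity for the `Der`-part of the bracket, on basis elements. -/
lemma J3 (r s t : Fin n → ℤ) (i j k : Fin n) :
    DDD (Finsupp.single ((r, i) : Idx n) (1:ℂ)) (fD ((s, j) : Idx n) ((t, k) : Idx n))
      + DDD (Finsupp.single ((s, j) : Idx n) (1:ℂ)) (fD ((t, k) : Idx n) ((r, i) : Idx n))
      + DDD (Finsupp.single ((t, k) : Idx n) (1:ℂ)) (fD ((r, i) : Idx n) ((s, j) : Idx n))
      = 0 := by
  simp only [fD, map_sub, hDDD]
  rw [show r + (s + t) = r + s + t from by abel, show s + (t + r) = r + s + t from by abel,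
    show t + (r + s) = r + s + t from by abel]
  ext x
  simp only [Finsupp.coe_add, Finsupp.coe_sub, Pi.add_apply, Pi.sub_apply,
    Finsupp.coe_smul, Pi.smul_apply, Finsupp.single_apply, Finsupp.coe_zero, Pi.zero_apply,
    smul_eq_mul]
  push_cast [Pi.add_apply]
  split_ifs <;> ring

/-- Core computation: the 2-cocycle condition, on basis elements. -/
lemma J2 (r s t : Fin n → ℤ) (i j k : Fin n) :
    (DDO (Finsupp.single ((r, i) : Idx n) (1:ℂ)) (fD ((s, j) : Idx n) ((t, k) : Idx n))
       + Aq (Finsupp.single ((r, i) : Idx n) (1:ℂ)) (fO ((s, j) : Idx n) ((t, k) : Idx n)))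
    + (DDO (Finsupp.single ((s, j) : Idx n) (1:ℂ)) (fD ((t, k) : Idx n) ((r, i) : Idx n))
       + Aq (Finsupp.single ((s, j) : Idx n) (1:ℂ)) (fO ((t, k) : Idx n) ((r, i) : Idx n)))
    + (DDO (Finsupp.single ((t, k) : Idx n) (1:ℂ)) (fD ((r, i) : Idx n) ((s, j) : Idx n))
       + Aq (Finsupp.single ((t, k) : Idx n) (1:ℂ)) (fO ((r, i) : Idx n) ((s, j) : Idx n)))
    = 0 := by
  simp only [fD, fO, map_sub, map_smul, hDDO]
  simp only [fO, act_K, smul_add, smul_smul]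
  rw [show r + (s + t) = r + s + t from by abel, show s + (t + r) = r + s + t from by abel,
    show t + (r + s) = r + s + t from by abel]
  have h0 : Kc n (zc r) (r + s + t) + Kc n (zc s) (r + s + t) + Kc n (zc t) (r + s + t) = 0 := by
    rw [Kc_add, Kc_add, ← zc_add, ← zc_add]
    exact Kc_zc_self (r + s + t)
  have hK : Kc n (zc t) (r + s + t) =
      -(Kc n (zc r) (r + s + t) + Kc n (zc s) (r + s + t)) :=
    (neg_eq_of_add_eq_zero_right h0).symm
  rw [hK]
  push_cast [Pi.add_apply]
  module

lemma hA0 (p : Idx n) (m : Fin n → ℤ) (a : Fin n) (c : ℂ) :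
    A0 (Finsupp.single p (1:ℂ)) (Finsupp.single ((m, a) : Idx n) c) = c • fA p (m, a) := by
  rw [show (A0 : DerF n →ₗ[ℂ] _) = L2 fA from rfl, L2_single, one_smul]

lemma single_eq_smul (p : Idx n) (c : ℂ) :
    Finsupp.single p c = c • Finsupp.single p (1:ℂ) := by
  rw [Finsupp.smul_single', mul_one]

/-- The action of `Der A` on `Ω_A/d_A` is a representation of the bracket. -/
lemma repL (D1 D2 : DerF n) (ω : OmegaQuot n) :
    Aq (DDD D1 D2) ω = Aq D1 (Aq D2 ω) - Aq D2 (Aq D1 ω) := by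
  obtain ⟨w, rfl⟩ := Submodule.Quotient.mk_surjective (dA n) ω
  induction D1 using Finsupp.induction_linear with
  | zero => simp
  | add f g hf hg => simp only [map_add, LinearMap.add_apply, hf, hg]; abel
  | single p c1 =>
  induction D2 using Finsupp.induction_linear with
  | zero => simp
  | add f g hf hg => simp only [map_add, LinearMap.add_apply, hf, hg]; abel
  | single q c2 =>
  induction w using Finsupp.induction_linear with
  | zero => simp
  | add f g hf hg =>
      simp only [Submodule.Quotient.mk_add, map_add, hf, hg]; abel
  | single m c3 =>
  obtain ⟨r, i⟩ := p; obtain ⟨s, j⟩ := q; obtain ⟨t, k⟩ := m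
  rw [single_eq_smul ((r, i) : Idx n) c1, single_eq_smul ((s, j) : Idx n) c2,
    single_eq_smul ((t, k) : Idx n) c3, Submodule.Quotient.mk_smul]
  simp only [map_smul, LinearMap.smul_apply, Aq_mk, hDDD, hA0, one_smul]
  rw [J1 r s t i j k]
  module

/-- Jacobi identity for the `Der A`-component. -/
lemma wittL (D1 D2 D3 : DerF n) :
    DDD D1 (DDD D2 D3) + DDD D2 (DDD D3 D1) + DDD D3 (DDD D1 D2) = 0 := by
  induction D1 using Finsupp.induction_linear with
  | zero => simp
  | add f g hf hg =>
      simp only [map_add, LinearMap.add_apply] at hf hg ⊢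
      linear_combination (norm := abel) hf + hg
  | single p c1 =>
  induction D2 using Finsupp.induction_linear with
  | zero => simp
  | add f g hf hg =>
      simp only [map_add, LinearMap.add_apply] at hf hg ⊢
      linear_combination (norm := abel) hf + hg
  | single q c2 =>
  induction D3 using Finsupp.induction_linear with
  | zero => simp
  | add f g hf hg =>
      simp only [map_add, LinearMap.add_apply] at hf hg ⊢
      linear_combination (norm := abel) hf + hg
  | single m c3 =>
  obtain ⟨r, i⟩ := p; obtain ⟨s, j⟩ := q; obtain ⟨t, k⟩ := m
  rw [single_eq_smul ((r, i) : Idx n) c1, single_eq_smul ((s, j) : Idx n) c2,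
    single_eq_smul ((t, k) : Idx n) c3]
  simp only [map_smul, LinearMap.smul_apply, hDDD, one_smul]
  have h := J3 r s t i j k
  linear_combination (norm := module) (c1 * c2 * c3) • h

/-- The 2-cocycle condition. -/
lemma cocL (D1 D2 D3 : DerF n) :
    (DDO D1 (DDD D2 D3) + Aq D1 (DDO D2 D3))
      + (DDO D2 (DDD D3 D1) + Aq D2 (DDO D3 D1))
      + (DDO D3 (DDD D1 D2) + Aq D3 (DDO D1 D2)) = 0 := by
  induction D1 using Finsupp.induction_linear with
  | zero => simp
  | add f g hf hg =>
      simp only [map_add, LinearMap.add_apply] at hf hg ⊢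
      linear_combination (norm := abel) hf + hg
  | single p c1 =>
  induction D2 using Finsupp.induction_linear with
  | zero => simp
  | add f g hf hg =>
      simp only [map_add, LinearMap.add_apply] at hf hg ⊢
      linear_combination (norm := abel) hf + hg
  | single q c2 =>
  induction D3 using Finsupp.induction_linear with
  | zero => simp
  | add f g hf hg =>
      simp only [map_add, LinearMap.add_apply] at hf hg ⊢
      linear_combination (norm := abel) hf + hg
  | single m c3 =>
  obtain ⟨r, i⟩ := p; obtain ⟨s, j⟩ := q; obtain ⟨t, k⟩ := m
  rw [single_eq_smul ((r, i) : Idx n) c1, single_eq_smul ((s, j) : Idx n) c2,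
    single_eq_smul ((t, k) : Idx n) c3]
  simp only [map_smul, LinearMap.smul_apply, hDDD, hDDO, one_smul]
  have h := J2 r s t i j k
  linear_combination (norm := module) (c1 * c2 * c3) • h
lemma DDD_diag (D : DerF n) : DDD D D = 0 := L2_diag_zero fD fD_antisym D
lemma DDO_diag (D : DerF n) : DDO D D = 0 := L2_diag_zero fO fO_antisym D

lemma jac_rot (a b c : HatDer n)
    (h : Br a (Br b c) + Br b (Br c a) + Br c (Br a b) = 0) :
    Br b (Br c a) + Br c (Br a b) + Br a (Br b c) = 0 := by
  linear_combination (norm := abel) h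

lemma jac_add1 (a1 a2 b c : HatDer n)
    (h1 : Br a1 (Br b c) + Br b (Br c a1) + Br c (Br a1 b) = 0)
    (h2 : Br a2 (Br b c) + Br b (Br c a2) + Br c (Br a2 b) = 0) :
    Br (a1 + a2) (Br b c) + Br b (Br c (a1 + a2)) + Br c (Br (a1 + a2) b) = 0 := by
  simp only [map_add, LinearMap.add_apply]
  linear_combination (norm := abel) h1 + h2

lemma jac_add2 (a b1 b2 c : HatDer n)
    (h1 : Br a (Br b1 c) + Br b1 (Br c a) + Br c (Br a b1) = 0)
    (h2 : Br a (Br b2 c) + Br b2 (Br c a) + Br c (Br a b2) = 0) :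
    Br a (Br (b1 + b2) c) + Br (b1 + b2) (Br c a) + Br c (Br a (b1 + b2)) = 0 := by
  simp only [map_add, LinearMap.add_apply]
  linear_combination (norm := abel) h1 + h2

lemma jac_add3 (a b c1 c2 : HatDer n)
    (h1 : Br a (Br b c1) + Br b (Br c1 a) + Br c1 (Br a b) = 0)
    (h2 : Br a (Br b c2) + Br b (Br c2 a) + Br c2 (Br a b) = 0) :
    Br a (Br b (c1 + c2)) + Br b (Br (c1 + c2) a) + Br (c1 + c2) (Br a b) = 0 := by
  simp only [map_add, LinearMap.add_apply]
  linear_combination (norm := abel) h1 + h2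

lemma caseOO (om ta : OmegaQuot n) (z : HatDer n) :
    Br ((om, 0) : HatDer n) (Br ((ta, 0) : HatDer n) z)
      + Br ((ta, 0) : HatDer n) (Br z ((om, 0) : HatDer n))
      + Br z (Br ((om, 0) : HatDer n) ((ta, 0) : HatDer n)) = 0 := by
  simp [Br_apply, Prod.ext_iff, DDD_diag, DDO_diag]

lemma caseODD (om : OmegaQuot n) (D1 D2 : DerF n) :
    Br ((om, 0) : HatDer n) (Br ((0, D1) : HatDer n) ((0, D2) : HatDer n))
      + Br ((0, D1) : HatDer n) (Br ((0, D2) : HatDer n) ((om, 0) : HatDer n))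
      + Br ((0, D2) : HatDer n) (Br ((om, 0) : HatDer n) ((0, D1) : HatDer n)) = 0 := by
  simp only [Br_apply, map_zero, LinearMap.zero_apply, add_zero, zero_add, zero_sub, sub_zero,
    map_neg, Prod.mk_add_mk]
  simp only [LinearMap.neg_apply, Prod.mk_eq_zero]
  exact ⟨by linear_combination (norm := abel) -(repL D1 D2 om), trivial⟩

lemma caseDDD (D1 D2 D3 : DerF n) :
    Br ((0, D1) : HatDer n) (Br ((0, D2) : HatDer n) ((0, D3) : HatDer n))
      + Br ((0, D2) : HatDer n) (Br ((0, D3) : HatDer n) ((0, D1) : HatDer n))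
      + Br ((0, D3) : HatDer n) (Br ((0, D1) : HatDer n) ((0, D2) : HatDer n)) = 0 := by
  simp only [Br_apply, map_zero, LinearMap.zero_apply, add_zero, zero_add, zero_sub, sub_zero,
    map_neg, Prod.mk_add_mk, Prod.mk_eq_zero]
  exact ⟨cocL D1 D2 D3, wittL D1 D2 D3⟩

end Aux

theorem stmt2 (n : ℕ) :
    ∃ br : HatDer n →ₗ[ℂ] HatDer n →ₗ[ℂ] HatDer n,
      -- [D(u,r), D(v,s)] = D((u,s)v − (v,r)u, r+s) − (u,s)(v,r) K(r, r+s)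
      (∀ (u v : Fin n → ℂ) (r s : Fin n → ℤ),
        br (0, Dc n u r) (0, Dc n v s) =
          (-((dot u (zc s)) * (dot v (zc r))) • Kc n (zc r) (r + s),
            Dc n (dot u (zc s) • v - dot v (zc r) • u) (r + s))) ∧
      -- [D(u,r), K(v,s)] = (u,s) K(v, r+s) + (u,v) K(r, r+s)
      (∀ (u v : Fin n → ℂ) (r s : Fin n → ℤ),
        br (0, Dc n u r) (Kc n v s, 0) =
          (dot u (zc s) • Kc n v (r + s) + dot u v • Kc n (zc r) (r + s), 0)) ∧
      -- [K(u,r), K(v,s)] = 0 (indeed Ω_A/d_A brackets trivially with itself):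
      (∀ ω ω' : OmegaQuot n, br (ω, 0) (ω', 0) = 0) ∧
      -- the bracket is alternating:
      (∀ x : HatDer n, br x x = 0) ∧
      -- the Jacobi identity holds:
      (∀ x y z : HatDer n, br x (br y z) + br y (br z x) + br z (br x y) = 0) := by
  refine ⟨Br, ?_, ?_, ?_, ?_, ?_⟩
  · intro u v r s
    simp only [Br_apply, map_zero, LinearMap.zero_apply, add_zero, sub_zero, DDO_Dc, DDD_Dc]
  · intro u v r s
    simp only [Br_apply, map_zero, LinearMap.zero_apply, add_zero, zero_add, sub_zero]
    rw [Kc_eq_mk v s, Aq_mk, A0_Dc]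
  · intro om om'
    simp [Br_apply, Prod.ext_iff]
  · intro x
    simp [Br_apply, Prod.ext_iff, DDD_diag, DDO_diag]
  · intro x y z
    obtain ⟨o1, d1⟩ := x; obtain ⟨o2, d2⟩ := y; obtain ⟨o3, d3⟩ := z
    have hx : ((o1, d1) : HatDer n) = ((o1, 0) : HatDer n) + ((0, d1) : HatDer n) := by simp
    have hy : ((o2, d2) : HatDer n) = ((o2, 0) : HatDer n) + ((0, d2) : HatDer n) := by simp
    have hz : ((o3, d3) : HatDer n) = ((o3, 0) : HatDer n) + ((0, d3) : HatDer n) := by simp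
    rw [hx, hy, hz]
    refine jac_add1 _ _ _ _ ?_ ?_ <;> refine jac_add2 _ _ _ _ ?_ ?_ <;>
      refine jac_add3 _ _ _ _ ?_ ?_
    · exact caseOO o1 o2 _
    · exact caseOO o1 o2 _
    · exact jac_rot _ _ _ (caseOO o3 o1 _)
    · exact caseODD o1 d2 d3
    · exact jac_rot _ _ _ (jac_rot _ _ _ (caseOO o2 o3 _))
    · exact jac_rot _ _ _ (jac_rot _ _ _ (caseODD o2 d3 d1))
    · exact jac_rot _ _ _ (caseODD o3 d1 d2)
    · exact caseDDD d1 d2 d3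
end

section
/- Let V be an irreducible weight module for the toroidal Lie algebra τ̃ with finite-dimensional weight spaces. Any nonzero central operator z of degree m on V is invertible, and its inverse is a central operator of degree −m. -/
/-- τ̃ = 𝒢⊗A ⊕ Ω_A/d_A ⊕ D as a vector space. -/
abbrev TorTilde (n : ℕ) (G : Type*) [LieRing G] [LieAlgebra ℂ G] :=
  ((Fin n → ℤ) →₀ G) × OmegaQuot n × (Fin n → ℂ)

section
variable (n : ℕ) (G : Type*) [LieRing G] [LieAlgebra ℂ G]

noncomputable def gX (r : Fin n → ℤ) (X : G) : TorTilde n G := (Finsupp.single r X, 0, 0)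

noncomputable def gK (u : Fin n → ℂ) (r : Fin n → ℤ) : TorTilde n G := (0, Kc n u r, 0)

noncomputable def gd (i : Fin n) : TorTilde n G := (0, 0, Pi.single i 1)

/-- The Cartan subalgebra h̃ = h ⊕ Σ ℂKᵢ ⊕ D of τ̃, as a set of elements. -/
noncomputable def cartSet (H : LieSubalgebra ℂ G) : Set (TorTilde n G) :=
  ((fun X : G => gX n G 0 X) '' (H : Set G)) ∪
    (Set.range fun u : Fin n → ℂ => gK n G u 0) ∪ (Set.range (gd n G))

/-- The weight space of a weight module attached to a weight χ (a simultaneous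
eigenvalue function on the Cartan h̃). -/
noncomputable def wtSp (H : LieSubalgebra ℂ G) {V : Type*} [AddCommGroup V] [Module ℂ V]
    (ρ : TorTilde n G →ₗ[ℂ] Module.End ℂ V) (χ : TorTilde n G → ℂ) : Submodule ℂ V :=
  ⨅ x ∈ cartSet n G H, Module.End.eigenspace (ρ x) (χ x)
end

/-! A central operator `z` of degree `m` satisfies `[ρ x, z] = (∑ i, dᵢ mᵢ) z` for every
`x = (f, ω, d)` in τ̃. Hence its kernel and its image are submodules, so by irreducibility `z`
is bijective, and conjugating this relation by `z⁻¹` shows that `z⁻¹` has degree `-m`. -/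

section TwistedCommutation

variable {K V ι : Type*} [CommRing K] [AddCommGroup V] [Module K V]
  {ρ : ι → Module.End K V} {z : Module.End K V} {c : ι → K}

lemma ker_invariant_of_commutator_eq_smul
    (hz : ∀ x, ρ x ∘ₗ z - z ∘ₗ ρ x = c x • z) (x : ι) {v : V} (hv : v ∈ LinearMap.ker z) :
    ρ x v ∈ LinearMap.ker z := by
  have h := LinearMap.congr_fun (hz x) v
  simp only [LinearMap.sub_apply, LinearMap.comp_apply, LinearMap.smul_apply,
    LinearMap.mem_ker.mp hv, map_zero, smul_zero, zero_sub, neg_eq_zero] at h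
  exact h

lemma range_invariant_of_commutator_eq_smul
    (hz : ∀ x, ρ x ∘ₗ z - z ∘ₗ ρ x = c x • z) (x : ι) {v : V} (hv : v ∈ LinearMap.range z) :
    ρ x v ∈ LinearMap.range z := by
  obtain ⟨w, rfl⟩ := hv
  refine ⟨ρ x w + c x • w, ?_⟩
  have h := LinearMap.congr_fun (hz x) w
  simp only [LinearMap.sub_apply, LinearMap.comp_apply, LinearMap.smul_apply] at h
  rw [map_add, map_smul, ← h, add_sub_cancel]

theorem bijective_of_commutator_eq_smul
    (hirr : ∀ U : Submodule K V, (∀ x v, v ∈ U → ρ x v ∈ U) → U = ⊥ ∨ U = ⊤)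
    (hz0 : z ≠ 0) (hz : ∀ x, ρ x ∘ₗ z - z ∘ₗ ρ x = c x • z) :
    Function.Bijective z := by
  refine ⟨LinearMap.ker_eq_bot.mp ?_, LinearMap.range_eq_top.mp ?_⟩
  · refine (hirr _ fun x _ => ker_invariant_of_commutator_eq_smul hz x).resolve_right ?_
    exact fun h => hz0 (LinearMap.ker_eq_top.mp h)
  · refine (hirr _ fun x _ => range_invariant_of_commutator_eq_smul hz x).resolve_left ?_
    exact fun h => hz0 (LinearMap.range_eq_bot.mp h)

end TwistedCommutation

lemma LinearEquiv.symm_commutator_eq_neg_smul {K V : Type*} [CommRing K] [AddCommGroup V]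
    [Module K V] (e : V ≃ₗ[K] V) {A : Module.End K V} {c : K}
    (h : A ∘ₗ e - e ∘ₗ A = c • (e : Module.End K V)) :
    A ∘ₗ e.symm - e.symm ∘ₗ A = (-c) • (e.symm : Module.End K V) := by
  have h' := congrArg (fun f => (e.symm : Module.End K V) ∘ₗ f ∘ₗ (e.symm : Module.End K V)) h
  simp only [LinearMap.sub_comp, LinearMap.comp_sub, LinearMap.comp_assoc, e.comp_symm,
    LinearMap.comp_id, LinearMap.smul_comp, LinearMap.comp_smul] at h'
  rw [← LinearMap.comp_assoc, e.symm_comp, LinearMap.id_comp] at h'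
  rw [neg_smul, ← h', neg_sub]

namespace TorTilde

variable {n : ℕ} {G : Type*} [LieRing G] [LieAlgebra ℂ G]

lemma Kc_single (r : Fin n → ℤ) (i : Fin n) (c : ℂ) :
    Kc n (Pi.single i c) r = Submodule.Quotient.mk (Finsupp.single (r, i) c) := by
  rw [Kc, Finset.sum_eq_single_of_mem i (Finset.mem_univ i) fun j _ hj => by simp [hj]]
  simp

theorem linearMap_ext {M : Type*} [AddCommGroup M] [Module ℂ M] {f g : TorTilde n G →ₗ[ℂ] M}
    (hX : ∀ r X, f (gX n G r X) = g (gX n G r X))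
    (hK : ∀ u r, f (gK n G u r) = g (gK n G u r))
    (hd : ∀ i, f (gd n G i) = g (gd n G i)) : f = g := by
  refine LinearMap.prod_ext (Finsupp.lhom_ext fun r X => hX r X) (LinearMap.prod_ext ?_ ?_)
  · refine Submodule.linearMap_qext _ (Finsupp.lhom_ext fun ⟨r, i⟩ c => ?_)
    simpa [gK, Kc_single] using hK (Pi.single i c) r
  · refine LinearMap.pi_ext fun i c => ?_
    have hc : ((0, 0, Pi.single i c) : TorTilde n G) = c • gd n G i := by
      simp [gd, ← Pi.single_smul]
    simp only [LinearMap.comp_apply, LinearMap.inr_apply, hc, map_smul, hd]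

/-- `(f, ω, d) ↦ ∑ i, dᵢ mᵢ`. -/
noncomputable def degPairing (m : Fin n → ℤ) : TorTilde n G →ₗ[ℂ] ℂ :=
  Fintype.linearCombination ℂ (fun i => (m i : ℂ)) ∘ₗ LinearMap.snd ℂ _ _ ∘ₗ LinearMap.snd ℂ _ _

@[simp] lemma degPairing_gX (m : Fin n → ℤ) (r : Fin n → ℤ) (X : G) :
    degPairing m (gX n G r X) = 0 := by
  simp [degPairing, gX]

@[simp] lemma degPairing_gK (m : Fin n → ℤ) (u : Fin n → ℂ) (r : Fin n → ℤ) :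
    degPairing (G := G) m (gK n G u r) = 0 := by
  simp [degPairing, gK]

@[simp] lemma degPairing_gd (m : Fin n → ℤ) (i : Fin n) :
    degPairing (G := G) m (gd n G i) = m i := by
  simp [degPairing, gd, Fintype.linearCombination_apply_single]

theorem commutator_eq_degPairing_smul {V : Type*} [AddCommGroup V] [Module ℂ V]
    {ρ : TorTilde n G →ₗ[ℂ] Module.End ℂ V} {m : Fin n → ℤ} {z : V →ₗ[ℂ] V}
    (hz1 : ∀ (r : Fin n → ℤ) (X : G), ρ (gX n G r X) ∘ₗ z = z ∘ₗ ρ (gX n G r X))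
    (hz2 : ∀ (u : Fin n → ℂ) (r : Fin n → ℤ), ρ (gK n G u r) ∘ₗ z = z ∘ₗ ρ (gK n G u r))
    (hz3 : ∀ i : Fin n, ρ (gd n G i) ∘ₗ z - z ∘ₗ ρ (gd n G i) = (m i : ℂ) • z)
    (x : TorTilde n G) : ρ x ∘ₗ z - z ∘ₗ ρ x = degPairing m x • z := by
  suffices (LinearMap.mulRight ℂ z - LinearMap.mulLeft ℂ z) ∘ₗ ρ = (degPairing m).smulRight z from
    LinearMap.congr_fun this x
  refine linearMap_ext (fun r X => ?_) (fun u r => ?_) (fun i => ?_) <;>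
    simp [Module.End.mul_eq_comp, hz1, hz2, hz3]

end TorTilde

open TorTilde in
theorem stmt9_general (n : ℕ) (G : Type*) [LieRing G] [LieAlgebra ℂ G]
    -- V is a module for τ̃:
    (V : Type*) [AddCommGroup V] [Module ℂ V]
    (ρ : TorTilde n G →ₗ[ℂ] Module.End ℂ V)
    -- V is irreducible:
    (hirr : ∀ U : Submodule ℂ V, (∀ x v, v ∈ U → ρ x v ∈ U) → U = ⊥ ∨ U = ⊤)
    -- z is a central operator of degree m:
    (m : Fin n → ℤ) (z : V →ₗ[ℂ] V)
    (hz1 : ∀ (r : Fin n → ℤ) (X : G), ρ (gX n G r X) ∘ₗ z = z ∘ₗ ρ (gX n G r X))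
    (hz2 : ∀ (u : Fin n → ℂ) (r : Fin n → ℤ), ρ (gK n G u r) ∘ₗ z = z ∘ₗ ρ (gK n G u r))
    (hz3 : ∀ i : Fin n, ρ (gd n G i) ∘ₗ z - z ∘ₗ ρ (gd n G i) = (m i : ℂ) • z) :
    -- any nonzero central operator is invertible, with inverse central of degree −m:
    z ≠ 0 →
      ∃ z' : V →ₗ[ℂ] V, z' ∘ₗ z = LinearMap.id ∧ z ∘ₗ z' = LinearMap.id ∧
        (∀ (r : Fin n → ℤ) (X : G), ρ (gX n G r X) ∘ₗ z' = z' ∘ₗ ρ (gX n G r X)) ∧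
        (∀ (u : Fin n → ℂ) (r : Fin n → ℤ), ρ (gK n G u r) ∘ₗ z' = z' ∘ₗ ρ (gK n G u r)) ∧
        (∀ i : Fin n, ρ (gd n G i) ∘ₗ z' - z' ∘ₗ ρ (gd n G i) = ((-(m i) : ℤ) : ℂ) • z') := by
  intro hz0
  have hz := commutator_eq_degPairing_smul hz1 hz2 hz3
  let e := LinearEquiv.ofBijective z (bijective_of_commutator_eq_smul hirr hz0 hz)
  have he : ∀ x, ρ x ∘ₗ e.symm - e.symm ∘ₗ ρ x = (-degPairing m x) • (e.symm : V →ₗ[ℂ] V) :=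
    fun x => e.symm_commutator_eq_neg_smul (hz x)
  refine ⟨e.symm, e.symm_comp, e.comp_symm, fun r X => ?_, fun u r => ?_, fun i => ?_⟩
  · simpa [sub_eq_zero] using he (gX n G r X)
  · simpa [sub_eq_zero] using he (gK n G u r)
  · simpa using he (gd n G i)

theorem stmt9 (n : ℕ) (G : Type*) [LieRing G] [LieAlgebra ℂ G]
    [FiniteDimensional ℂ G] [LieAlgebra.IsSimple ℂ G]
    (H : LieSubalgebra ℂ G) (hH : H.IsCartanSubalgebra)
    (Bf : G →ₗ[ℂ] G →ₗ[ℂ] ℂ) (hBsymm : ∀ X Y, Bf X Y = Bf Y X)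
    (hBinv : ∀ X Y Z, Bf ⁅X, Y⁆ Z = Bf X ⁅Y, Z⁆)
    -- the toroidal Lie bracket on τ̃:
    (br : TorTilde n G →ₗ[ℂ] TorTilde n G →ₗ[ℂ] TorTilde n G)
    (h1 : ∀ (X Y : G) (r s : Fin n → ℤ),
      br (gX n G r X) (gX n G s Y) =
        gX n G (r + s) ⁅X, Y⁆ + Bf X Y • gK n G (zc r) (r + s))
    (h2 : ∀ (ω : OmegaQuot n) (r s : Fin n → ℤ) (X : G) (u : Fin n → ℂ),
      br (0, ω, 0) (gX n G r X) = 0 ∧ br (0, ω, 0) (gK n G u s) = 0)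
    (h3 : ∀ (i : Fin n) (r : Fin n → ℤ) (X : G),
      br (gd n G i) (gX n G r X) = (r i : ℂ) • gX n G r X)
    (h4 : ∀ (i : Fin n) (u : Fin n → ℂ) (r : Fin n → ℤ),
      br (gd n G i) (gK n G u r) = (r i : ℂ) • gK n G u r)
    (h5 : ∀ i j : Fin n, br (gd n G i) (gd n G j) = 0)
    (hskew : ∀ x, br x x = 0)
    (hjac : ∀ x y z, br x (br y z) + br y (br z x) + br z (br x y) = 0)
    -- V is a module for τ̃:
    (V : Type*) [AddCommGroup V] [Module ℂ V] [Nontrivial V]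
    (ρ : TorTilde n G →ₗ[ℂ] Module.End ℂ V)
    (hρ : ∀ x y, ρ (br x y) = ⁅ρ x, ρ y⁆)
    -- V is a weight module with finite-dimensional weight spaces:
    (hwt : ⨆ χ : TorTilde n G → ℂ, wtSp n G H ρ χ = ⊤)
    (hfin : ∀ χ : TorTilde n G → ℂ, FiniteDimensional ℂ (wtSp n G H ρ χ))
    -- V is irreducible:
    (hirr : ∀ U : Submodule ℂ V, (∀ x v, v ∈ U → ρ x v ∈ U) → U = ⊥ ∨ U = ⊤)
    -- z is a central operator of degree m:
    (m : Fin n → ℤ) (z : V →ₗ[ℂ] V)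
    (hz1 : ∀ (r : Fin n → ℤ) (X : G), ρ (gX n G r X) ∘ₗ z = z ∘ₗ ρ (gX n G r X))
    (hz2 : ∀ (u : Fin n → ℂ) (r : Fin n → ℤ), ρ (gK n G u r) ∘ₗ z = z ∘ₗ ρ (gK n G u r))
    (hz3 : ∀ i : Fin n, ρ (gd n G i) ∘ₗ z - z ∘ₗ ρ (gd n G i) = (m i : ℂ) • z) :
    -- any nonzero central operator is invertible, with inverse central of degree −m:
    z ≠ 0 →
      ∃ z' : V →ₗ[ℂ] V, z' ∘ₗ z = LinearMap.id ∧ z ∘ₗ z' = LinearMap.id ∧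
        (∀ (r : Fin n → ℤ) (X : G), ρ (gX n G r X) ∘ₗ z' = z' ∘ₗ ρ (gX n G r X)) ∧
        (∀ (u : Fin n → ℂ) (r : Fin n → ℤ), ρ (gK n G u r) ∘ₗ z' = z' ∘ₗ ρ (gK n G u r)) ∧
        (∀ i : Fin n, ρ (gd n G i) ∘ₗ z' - z' ∘ₗ ρ (gd n G i) = ((-(m i) : ℤ) : ℂ) • z') :=
  stmt9_general n G V ρ hirr m z hz1 hz2 hz3
end

section
/- The formula D(u,r)·v(m) = (u, m+α) v(m+r) + (Σ_{i,j} uᵢrⱼ E_{ji} v)(m+r) defines a representation of the Lie algebra Der A on F^α(ψ,b) = V(ψ,b) ⊗ A, i.e. [D(u,r),D(v,s)] acts as D(w,r+s) with w = (u,s)v − (v,r)u. -/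
/- STATEMENT 12: The formula
D(u,r)·v(m) = (u, m+α) v(m+r) + (Σ_{i,j} uᵢrⱼ E_{ji} v)(m+r)
defines a representation of the Lie algebra Der A on F^α(ψ,b) = V(ψ,b) ⊗ A,
i.e. [D(u,r),D(v,s)] acts as D(w,r+s) with w = (u,s)v − (v,r)u. -/

theorem stmt12 (n : ℕ) (V : Type*) [AddCommGroup V] [Module ℂ V]
    -- V is a gl_n-module:
    (ρgl : Matrix (Fin n) (Fin n) ℂ →ₗ[ℂ] Module.End ℂ V)
    (hρgl : ∀ M N : Matrix (Fin n) (Fin n) ℂ, ρgl ⁅M, N⁆ = ⁅ρgl M, ρgl N⁆)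
    (α : Fin n → ℂ) :
    -- Larsson's operators on F^α(ψ,b) = V ⊗ A, modeled as (Fin n → ℤ) →₀ V
    -- with v(m) = Finsupp.single m v:
    ∃ D : (Fin n → ℂ) → (Fin n → ℤ) → Module.End ℂ ((Fin n → ℤ) →₀ V),
      -- D(u,r)·v(m) = (u, m+α) v(m+r) + (Σ uᵢrⱼ E_{ji} v)(m+r):
      (∀ (u : Fin n → ℂ) (r m : Fin n → ℤ) (v : V),
        D u r (Finsupp.single m v) =
          Finsupp.single (m + r)
            ((∑ i, u i * ((m i : ℂ) + α i)) • v +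
              ρgl (Matrix.of fun j i => u i * (r j : ℂ)) v)) ∧
      -- this is a representation of Der A:
      (∀ (u v : Fin n → ℂ) (r s : Fin n → ℤ),
        ⁅D u r, D v s⁆ =
          D ((∑ i, u i * (s i : ℂ)) • v - (∑ i, v i * (r i : ℂ)) • u) (r + s)) := by
  classical
  set D : (Fin n → ℂ) → (Fin n → ℤ) → Module.End ℂ ((Fin n → ℤ) →₀ V) :=
    fun u r => Finsupp.lsum ℂ (fun m => Finsupp.lsingle (m + r) ∘ₗ
      ((∑ i, u i * ((m i : ℂ) + α i)) • (LinearMap.id : V →ₗ[ℂ] V)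
        + ρgl (Matrix.of fun j i => u i * (r j : ℂ)))) with hD
  have hsingle : ∀ (u : Fin n → ℂ) (r m : Fin n → ℤ) (v : V),
      D u r (Finsupp.single m v) = Finsupp.single (m + r)
        ((∑ i, u i * ((m i : ℂ) + α i)) • v +
          ρgl (Matrix.of fun j i => u i * (r j : ℂ)) v) := by
    intro u r m v
    simp [hD]
  refine ⟨D, hsingle, ?_⟩
  intro u v r s
  apply Finsupp.lhom_ext
  intro m w
  set a : ℂ := ∑ i, u i * ((m i : ℂ) + α i) with ha
  set b : ℂ := ∑ i, v i * ((m i : ℂ) + α i) with hb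
  set p : ℂ := ∑ i, u i * (s i : ℂ) with hp
  set q : ℂ := ∑ i, v i * (r i : ℂ) with hq
  set M : Matrix (Fin n) (Fin n) ℂ := Matrix.of fun j i => u i * (r j : ℂ) with hM
  set N : Matrix (Fin n) (Fin n) ℂ := Matrix.of fun j i => v i * (s j : ℂ) with hN
  have hsumU : (∑ i, u i * (((m + s) i : ℂ) + α i)) = a + p := by
    rw [ha, hp, ← Finset.sum_add_distrib]
    refine Finset.sum_congr rfl fun i _ => ?_
    push_cast [Pi.add_apply]
    ring
  have hsumV : (∑ i, v i * (((m + r) i : ℂ) + α i)) = b + q := by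
    rw [hb, hq, ← Finset.sum_add_distrib]
    refine Finset.sum_congr rfl fun i _ => ?_
    push_cast [Pi.add_apply]
    ring
  have hscal : (∑ i, (p • v - q • u) i * ((m i : ℂ) + α i)) = p * b - q * a := by
    rw [ha, hb, Finset.mul_sum, Finset.mul_sum, ← Finset.sum_sub_distrib]
    refine Finset.sum_congr rfl fun i _ => ?_
    simp [Pi.smul_apply, Pi.sub_apply, smul_eq_mul]
    ring
  have hmat : (Matrix.of fun j i => (p • v - q • u) i * (((r + s) j : ℂ)))
      = M * N - N * M + p • N - q • M := by
    ext j i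
    simp only [Matrix.of_apply, Matrix.sub_apply, Matrix.add_apply, Matrix.smul_apply,
      Matrix.mul_apply, hM, hN, smul_eq_mul, Pi.smul_apply, Pi.sub_apply]
    have h1 : ∑ k, (u k * (r j : ℂ)) * (v i * (s k : ℂ))
        = ((r j : ℂ) * v i) * ∑ k, u k * (s k : ℂ) := by
      rw [Finset.mul_sum]
      exact Finset.sum_congr rfl fun k _ => by ring
    have h2 : ∑ k, (v k * (s j : ℂ)) * (u i * (r k : ℂ))
        = ((s j : ℂ) * u i) * ∑ k, v k * (r k : ℂ) := by
      rw [Finset.mul_sum]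
      exact Finset.sum_congr rfl fun k _ => by ring
    rw [h1, h2, ← hp, ← hq]
    push_cast [Pi.add_apply]
    ring
  have hrep : ρgl (Matrix.of fun j i => (p • v - q • u) i * (((r + s) j : ℂ)))
      = ρgl M ∘ₗ ρgl N - ρgl N ∘ₗ ρgl M + p • ρgl N - q • ρgl M := by
    rw [hmat]
    have hc : ρgl (M * N - N * M) = ρgl M ∘ₗ ρgl N - ρgl N ∘ₗ ρgl M := by
      have := hρgl M N
      rw [Ring.lie_def, Ring.lie_def] at this
      simpa [Module.End.mul_eq_comp] using this
    simp only [map_add, map_sub, map_smul, hc]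
  -- now evaluate both sides on single m w
  have hms : m + s + r = m + (r + s) := by
    rw [add_right_comm, add_assoc]
  have hmr : m + r + s = m + (r + s) := by
    rw [add_assoc]
  calc ⁅D u r, D v s⁆ (Finsupp.single m w)
      = D u r (D v s (Finsupp.single m w)) - D v s (D u r (Finsupp.single m w)) := by
        simp [Ring.lie_def, Module.End.mul_eq_comp]
    _ = D ((∑ i, u i * (s i : ℂ)) • v - (∑ i, v i * (r i : ℂ)) • u) (r + s)
          (Finsupp.single m w) := by
        rw [hsingle v s m w, hsingle u r m w, Finsupp.single_add, Finsupp.single_add,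
          map_add, map_add,
          hsingle u r (m + s), hsingle u r (m + s),
          hsingle v s (m + r), hsingle v s (m + r),
          hsingle ((∑ i, u i * (s i : ℂ)) • v - (∑ i, v i * (r i : ℂ)) • u) (r + s) m w]
        rw [← hp, ← hq, ← ha, ← hb, ← hM, ← hN, hsumU, hsumV, hscal, hrep, hms, hmr]
        rw [← Finsupp.single_add, ← Finsupp.single_add, ← Finsupp.single_sub]
        congr 1
        simp only [LinearMap.sub_apply, LinearMap.add_apply, LinearMap.smul_apply,
          LinearMap.comp_apply, map_add, map_smul]
        module
end

section
/- With the action t^r · v(m) = v(m+r) of A and Larsson's action of Der A on F^α(ψ,b) = V(ψ,b)⊗A, one obtains a module for the semidirect product A ⋊ Der A, where [D(u,r), t^m] = (u,m) t^{r+m} and [t^r, t^s] = 0; moreover if V(ψ,b) ≠ 0 then F^α(ψ,b) is an irreducible A ⋊ Der A-module. -/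
/-!
The bracket relations are identities of operators on `(Fin n → ℤ) →₀ V`, checked on the basis
vectors `v(m)`; for `[D, D]` this reduces to a commutator identity for the matrices
`∑ uᵢ rⱼ E_{ji}` and the fact that `ρ` is a Lie algebra map.

For irreducibility, `D(eᵢ, 0)` acts on `v(m)` by the scalar `mᵢ + αᵢ`, and these scalars
separate the degrees `m`; so an invariant subspace `U` contains every homogeneous component of
each of its elements. The shifts `t^r` identify all homogeneous parts of `U` with the degree-zero
part `W ⊆ V`, and `t^{-r}` followed by `D(u, r)` acts on `W` as `(u, α - r) + ρ(∑ uᵢ rⱼ E_{ji})`.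
These matrices span `gl_n`, so `W` is a `gl_n`-submodule, hence `0` or `V`, and so is `U`.
-/

open Finsupp Finset

section WeightSeparation

variable {ι K V : Type*} [Field K] [AddCommGroup V] [Module K V]

theorem Finsupp.single_apply_mem_of_separating (U : Submodule K (ι →₀ V))
    (hsep : ∀ m₀ m₁, m₀ ≠ m₁ → ∃ c : ι → K, c m₀ ≠ c m₁ ∧
      ∀ x ∈ U, ∃ y ∈ U, ∀ m, y m = c m • x m)
    {x : ι →₀ V} (hx : x ∈ U) (m₀ : ι) : single m₀ (x m₀) ∈ U := by
  classical
  induction hk : #x.support using Nat.strong_induction_on generalizing x with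
  | _ k ih =>
  by_cases hsub : x.support ⊆ {m₀}
  · rwa [support_subset_singleton.1 hsub] at hx
  obtain ⟨m₁, hm₁, hne⟩ : ∃ m₁ ∈ x.support, m₁ ≠ m₀ := by
    by_contra! h
    exact hsub fun m hm => mem_singleton.2 (h m hm)
  obtain ⟨c, hc, hcU⟩ := hsep m₀ m₁ hne.symm
  obtain ⟨y, hyU, hy⟩ := hcU x hx
  -- `z` kills the `m₁`-component of `x` and rescales the `m₀`-component by `c m₀ - c m₁ ≠ 0`.
  set z := y - c m₁ • x
  have hz : ∀ m, z m = (c m - c m₁) • x m := fun m => by simp [z, hy, sub_smul]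
  have hzU : z ∈ U := U.sub_mem hyU (U.smul_mem _ hx)
  have hzsupp : z.support ⊆ x.support.erase m₁ := fun m hm => by
    rw [mem_support_iff, hz] at hm
    exact mem_erase.2 ⟨fun h => hm (by simp [h]),
      mem_support_iff.2 fun h => hm (by simp [h])⟩
  have hlt : #z.support < k :=
    hk ▸ (card_le_card hzsupp).trans_lt (card_erase_lt_of_mem hm₁)
  have := U.smul_mem (c m₀ - c m₁)⁻¹ (ih _ hlt hzU rfl)
  rwa [hz, smul_single, smul_smul, inv_mul_cancel₀ (sub_ne_zero.2 hc), one_smul] at this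

end WeightSeparation

namespace Larsson

variable {n : ℕ} {V : Type*} [AddCommGroup V] [Module ℂ V]

def pairing (u : Fin n → ℂ) (r : Fin n → ℤ) : ℂ := ∑ i, u i * (r i : ℂ)

def weight (α u : Fin n → ℂ) (m : Fin n → ℤ) : ℂ := ∑ i, u i * ((m i : ℂ) + α i)

/-- The matrix `∑ uᵢ rⱼ E_{ji}` of Larsson's action. -/
def outerMatrix (u : Fin n → ℂ) (r : Fin n → ℤ) : Matrix (Fin n) (Fin n) ℂ :=
  Matrix.of fun j i => u i * (r j : ℂ)

noncomputable def derOp (ρ : Matrix (Fin n) (Fin n) ℂ →ₗ[ℂ] Module.End ℂ V) (α u : Fin n → ℂ)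
    (r : Fin n → ℤ) : Module.End ℂ ((Fin n → ℤ) →₀ V) :=
  lsum ℂ fun m => (lsingle (m + r)).comp (weight α u m • LinearMap.id + ρ (outerMatrix u r))

variable (V) in
noncomputable def shift (r : Fin n → ℤ) : Module.End ℂ ((Fin n → ℤ) →₀ V) :=
  lmapDomain V ℂ (· + r)

variable (ρ : Matrix (Fin n) (Fin n) ℂ →ₗ[ℂ] Module.End ℂ V) (α : Fin n → ℂ)

theorem derOp_single (u : Fin n → ℂ) (r m : Fin n → ℤ) (v : V) :
    derOp ρ α u r (single m v) = single (m + r) (weight α u m • v + ρ (outerMatrix u r) v) := by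
  simp [derOp]

theorem shift_single (r m : Fin n → ℤ) (v : V) : shift V r (single m v) = single (m + r) v := by
  simp [shift, lmapDomain_apply, mapDomain_single]

theorem weight_add (u : Fin n → ℂ) (m s : Fin n → ℤ) :
    weight α u (m + s) = weight α u m + pairing u s := by
  simp only [weight, pairing, ← sum_add_distrib, Pi.add_apply, Int.cast_add]
  exact sum_congr rfl fun i _ => by ring

theorem weight_smul_sub_smul (u v : Fin n → ℂ) (a b : ℂ) (m : Fin n → ℤ) :
    weight α (a • u - b • v) m = a * weight α u m - b * weight α v m := by
  simp only [weight, Finset.mul_sum, ← sum_sub_distrib, Pi.sub_apply, Pi.smul_apply, smul_eq_mul]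
  exact sum_congr rfl fun i _ => by ring

theorem weight_single (i : Fin n) (m : Fin n → ℤ) :
    weight α (Pi.single i 1) m = m i + α i := by
  simp [weight, Pi.single_apply]

theorem outerMatrix_zero (u : Fin n → ℂ) : outerMatrix u 0 = 0 := by
  ext; simp [outerMatrix]

theorem outerMatrix_bracket (u v : Fin n → ℂ) (r s : Fin n → ℤ) :
    outerMatrix (pairing u s • v - pairing v r • u) (r + s) =
      pairing u s • outerMatrix v s - pairing v r • outerMatrix u r +
        ⁅outerMatrix u r, outerMatrix v s⁆ := by
  ext a b
  have huv : ∑ i, u i * r a * (v b * s i) = r a * v b * pairing u s := by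
    rw [pairing, Finset.mul_sum]
    exact sum_congr rfl fun i _ => by ring
  have hvu : ∑ i, v i * s a * (u b * r i) = s a * u b * pairing v r := by
    rw [pairing, Finset.mul_sum]
    exact sum_congr rfl fun i _ => by ring
  simp only [outerMatrix, Ring.lie_def, Matrix.sub_apply, Matrix.add_apply, Matrix.smul_apply,
    Matrix.mul_apply, Matrix.of_apply, smul_eq_mul, Pi.smul_apply, Pi.sub_apply, Pi.add_apply,
    Int.cast_add, huv, hvu]
  ring

theorem sum_outerMatrix_single (M : Matrix (Fin n) (Fin n) ℂ) :
    ∑ j, outerMatrix (M j) (Pi.single j 1) = M := by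
  ext a b
  simp [outerMatrix, Matrix.sum_apply, Pi.single_apply]

theorem lie_derOp_derOp (hρ : ∀ M N, ρ ⁅M, N⁆ = ⁅ρ M, ρ N⁆) (u v : Fin n → ℂ) (r s : Fin n → ℤ) :
    ⁅derOp ρ α u r, derOp ρ α v s⁆ = derOp ρ α (pairing u s • v - pairing v r • u) (r + s) := by
  refine lhom_ext fun m w => ?_
  have hsr : m + s + r = m + (r + s) := by abel
  simp only [Ring.lie_def, LinearMap.sub_apply, Module.End.mul_apply, derOp_single, map_add,
    map_smul, hsr, ← add_assoc, ← single_sub]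
  congr 1
  rw [outerMatrix_bracket, weight_smul_sub_smul, weight_add, weight_add, map_add, map_sub,
    map_smul, map_smul, hρ, Ring.lie_def]
  simp only [LinearMap.add_apply, LinearMap.sub_apply, LinearMap.smul_apply,
    Module.End.mul_apply]
  module

theorem lie_derOp_shift (u : Fin n → ℂ) (r m : Fin n → ℤ) :
    ⁅derOp ρ α u r, shift V m⁆ = pairing u m • shift V (r + m) := by
  refine lhom_ext fun k w => ?_
  have hmr : k + m + r = k + (r + m) := by abel
  simp only [Ring.lie_def, LinearMap.sub_apply, Module.End.mul_apply, LinearMap.smul_apply,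
    derOp_single, shift_single, hmr, ← add_assoc, ← single_sub, smul_single, weight_add]
  congr 1
  module

theorem lie_shift_shift (r s : Fin n → ℤ) : ⁅shift V r, shift V s⁆ = 0 := by
  refine lhom_ext fun k w => ?_
  simp [Ring.lie_def, shift_single, add_right_comm k s r]

theorem derOp_zero_apply (u : Fin n → ℂ) (x : (Fin n → ℤ) →₀ V) (m : Fin n → ℤ) :
    derOp ρ α u 0 x m = weight α u m • x m := by
  induction x using induction_linear with
  | zero => simp
  | add x y hx hy => simp [hx, hy]
  | single k v => by_cases h : k = m <;> simp [derOp_single, outerMatrix_zero, h]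

variable {ρ α} (U : Submodule ℂ ((Fin n → ℤ) →₀ V))

theorem single_mem_of_shift_mem (hT : ∀ r x, x ∈ U → shift V r x ∈ U) {m : Fin n → ℤ} {v : V}
    (h : single m v ∈ U) (m' : Fin n → ℤ) : single m' v ∈ U := by
  simpa [shift_single] using hT (m' - m) _ h

theorem single_apply_mem_of_derOp_mem (hD : ∀ u r x, x ∈ U → derOp ρ α u r x ∈ U)
    {x : (Fin n → ℤ) →₀ V} (hx : x ∈ U) (m : Fin n → ℤ) : single m (x m) ∈ U := by
  refine single_apply_mem_of_separating U (fun m₀ m₁ hne => ?_) hx m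
  obtain ⟨i, hi⟩ := Function.ne_iff.1 hne
  refine ⟨weight α (Pi.single i 1), ?_, fun x hx => ⟨_, hD _ 0 x hx, derOp_zero_apply ρ α _ x⟩⟩
  simpa [weight_single] using hi

theorem map_mem_comap_lsingle_zero (hD : ∀ u r x, x ∈ U → derOp ρ α u r x ∈ U)
    (hT : ∀ r x, x ∈ U → shift V r x ∈ U) (M : Matrix (Fin n) (Fin n) ℂ) {v : V}
    (hv : v ∈ U.comap (lsingle 0)) : ρ M v ∈ U.comap (lsingle 0) := by
  have houter : ∀ u r, ρ (outerMatrix u r) v ∈ U.comap (lsingle 0) := fun u r => by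
    have h := hD u r _ (single_mem_of_shift_mem U hT hv (-r))
    rw [derOp_single, neg_add_cancel] at h
    simpa using (U.comap (lsingle 0)).sub_mem h (Submodule.smul_mem _ (weight α u (-r)) hv)
  rw [← sum_outerMatrix_single M, map_sum, LinearMap.coe_sum, Finset.sum_apply]
  exact Submodule.sum_mem _ fun j _ => houter _ _

theorem eq_bot_or_eq_top_of_derOp_shift_mem
    (hρirr : ∀ W : Submodule ℂ V, (∀ M v, v ∈ W → ρ M v ∈ W) → W = ⊥ ∨ W = ⊤)
    (hD : ∀ u r x, x ∈ U → derOp ρ α u r x ∈ U) (hT : ∀ r x, x ∈ U → shift V r x ∈ U) :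
    U = ⊥ ∨ U = ⊤ := by
  have hcomponent : ∀ x ∈ U, ∀ m, x m ∈ U.comap (lsingle 0) := fun x hx m =>
    single_mem_of_shift_mem U hT (single_apply_mem_of_derOp_mem U hD hx m) 0
  refine (hρirr _ fun M v hv => map_mem_comap_lsingle_zero U hD hT M hv).imp (fun hW => ?_) ?_
  · refine (Submodule.eq_bot_iff U).2 fun x hx => ext fun m => ?_
    simpa [hW] using hcomponent x hx m
  · intro hW
    refine eq_top_iff.2 fun x _ => induction_linear x U.zero_mem (fun _ _ => U.add_mem) ?_
    exact fun m v =>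
      single_mem_of_shift_mem U hT (hW ▸ Submodule.mem_top : v ∈ U.comap (lsingle 0)) m

end Larsson

theorem stmt13_general (n : ℕ) (V : Type*) [AddCommGroup V] [Module ℂ V]
    -- V = V(ψ,b) is an irreducible finite-dimensional gl_n-module:
    (ρgl : Matrix (Fin n) (Fin n) ℂ →ₗ[ℂ] Module.End ℂ V)
    (hρgl : ∀ M N : Matrix (Fin n) (Fin n) ℂ, ρgl ⁅M, N⁆ = ⁅ρgl M, ρgl N⁆)
    (hVirr : ∀ U : Submodule ℂ V, (∀ M v, v ∈ U → ρgl M v ∈ U) → U = ⊥ ∨ U = ⊤)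
    (α : Fin n → ℂ) :
    ∃ (D : (Fin n → ℂ) → (Fin n → ℤ) → Module.End ℂ ((Fin n → ℤ) →₀ V))
      (T : (Fin n → ℤ) → Module.End ℂ ((Fin n → ℤ) →₀ V)),
      -- Larsson's action of Der A:
      (∀ (u : Fin n → ℂ) (r m : Fin n → ℤ) (v : V),
        D u r (Finsupp.single m v) =
          Finsupp.single (m + r)
            ((∑ i, u i * ((m i : ℂ) + α i)) • v +
              ρgl (Matrix.of fun j i => u i * (r j : ℂ)) v)) ∧
      -- the action t^r · v(m) = v(m+r) of A:
      (∀ (r m : Fin n → ℤ) (v : V), T r (Finsupp.single m v) = Finsupp.single (m + r) v) ∧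
      -- Der A acts as a Lie algebra:
      (∀ (u v : Fin n → ℂ) (r s : Fin n → ℤ),
        ⁅D u r, D v s⁆ =
          D ((∑ i, u i * (s i : ℂ)) • v - (∑ i, v i * (r i : ℂ)) • u) (r + s)) ∧
      -- the semidirect-product relations [D(u,r), t^m] = (u,m) t^{r+m}, [t^r,t^s] = 0:
      (∀ (u : Fin n → ℂ) (r m : Fin n → ℤ),
        ⁅D u r, T m⁆ = (∑ i, u i * (m i : ℂ)) • T (r + m)) ∧
      (∀ r s : Fin n → ℤ, ⁅T r, T s⁆ = 0) ∧
      -- F^α(ψ,b) is an irreducible A ⋊ Der A-module: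
      (∀ U : Submodule ℂ ((Fin n → ℤ) →₀ V),
        (∀ (u : Fin n → ℂ) (r : Fin n → ℤ) x, x ∈ U → D u r x ∈ U) →
        (∀ (r : Fin n → ℤ) x, x ∈ U → T r x ∈ U) → U = ⊥ ∨ U = ⊤) :=
  ⟨Larsson.derOp ρgl α, Larsson.shift V, Larsson.derOp_single ρgl α, Larsson.shift_single,
    Larsson.lie_derOp_derOp ρgl α hρgl, Larsson.lie_derOp_shift ρgl α, Larsson.lie_shift_shift,
    fun U => Larsson.eq_bot_or_eq_top_of_derOp_shift_mem U hVirr⟩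

theorem stmt13 (n : ℕ) (V : Type*) [AddCommGroup V] [Module ℂ V] [Nontrivial V]
    [FiniteDimensional ℂ V]
    -- V = V(ψ,b) is an irreducible finite-dimensional gl_n-module:
    (ρgl : Matrix (Fin n) (Fin n) ℂ →ₗ[ℂ] Module.End ℂ V)
    (hρgl : ∀ M N : Matrix (Fin n) (Fin n) ℂ, ρgl ⁅M, N⁆ = ⁅ρgl M, ρgl N⁆)
    (hVirr : ∀ U : Submodule ℂ V, (∀ M v, v ∈ U → ρgl M v ∈ U) → U = ⊥ ∨ U = ⊤)
    (α : Fin n → ℂ) :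
    ∃ (D : (Fin n → ℂ) → (Fin n → ℤ) → Module.End ℂ ((Fin n → ℤ) →₀ V))
      (T : (Fin n → ℤ) → Module.End ℂ ((Fin n → ℤ) →₀ V)),
      -- Larsson's action of Der A:
      (∀ (u : Fin n → ℂ) (r m : Fin n → ℤ) (v : V),
        D u r (Finsupp.single m v) =
          Finsupp.single (m + r)
            ((∑ i, u i * ((m i : ℂ) + α i)) • v +
              ρgl (Matrix.of fun j i => u i * (r j : ℂ)) v)) ∧
      -- the action t^r · v(m) = v(m+r) of A:
      (∀ (r m : Fin n → ℤ) (v : V), T r (Finsupp.single m v) = Finsupp.single (m + r) v) ∧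
      -- Der A acts as a Lie algebra:
      (∀ (u v : Fin n → ℂ) (r s : Fin n → ℤ),
        ⁅D u r, D v s⁆ =
          D ((∑ i, u i * (s i : ℂ)) • v - (∑ i, v i * (r i : ℂ)) • u) (r + s)) ∧
      -- the semidirect-product relations [D(u,r), t^m] = (u,m) t^{r+m}, [t^r,t^s] = 0:
      (∀ (u : Fin n → ℂ) (r m : Fin n → ℤ),
        ⁅D u r, T m⁆ = (∑ i, u i * (m i : ℂ)) • T (r + m)) ∧
      (∀ r s : Fin n → ℤ, ⁅T r, T s⁆ = 0) ∧
      -- F^α(ψ,b) is an irreducible A ⋊ Der A-module: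
      (∀ U : Submodule ℂ ((Fin n → ℤ) →₀ V),
        (∀ (u : Fin n → ℂ) (r : Fin n → ℤ) x, x ∈ U → D u r x ∈ U) →
        (∀ (r : Fin n → ℤ) x, x ∈ U → T r x ∈ U) → U = ⊥ ∨ U = ⊤) :=
  stmt13_general n V ρgl hρgl hVirr α
end
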